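/- arXiv:math/0210053 — 5 statements merged into one kernel-verified Lean document; each statement's English description precedes it below -/
import Mathlib

section
/- Let θ be an algebraic integer of degree m with minimal polynomial x^m - d_1 x^{m-1} - ⋯ - d_m, let 0 < δ < (1 + |d_1| + ⋯ + |d_m|)^{-1}, and let y > 0. For each j let K_j = ⟨y θ^j⟩ be the nearest integer to y θ^j and δ_j = y θ^j - K_j. If |δ_j| ≤ δ for j = A+1, …, A+b with b > m, then K_{j+m} = d_1 K_{j+m-1} + ⋯ + d_m K_j for all j = A+1, …, A+b-m. -/
open Real Filter Set MeasureTheory Polynomial ENNReal Topology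

/-! Since `θ ^ m = ∑ dᵢ θ ^ (m - 1 - i)`, the reals `y θ ^ j` satisfy the recurrence exactly.
Hence the integer `K_{j+m} - ∑ dᵢ K_{j+m-1-i}` equals `∑ dᵢ δ_{j+m-1-i} - δ_{j+m}`, whose absolute
value is at most `δ (1 + ∑ |dᵢ|) < 1`, so it vanishes. -/

/-- `μ̂_θ(t) = ∏_{k=0}^∞ cos(2π θ^{-k} t)`. -/
noncomputable def muHat (θ t : ℝ) : ℝ := ∏' k : ℕ, Real.cos (2 * π * θ⁻¹ ^ k * t)

/-- `θ` is a Pisot number: an algebraic integer `> 1` all of whose other conjugates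
have modulus `< 1`. -/
def IsPisot (θ : ℝ) : Prop :=
  1 < θ ∧ IsIntegral ℤ θ ∧
    ∀ z : ℂ, Polynomial.aeval z (minpoly ℤ θ) = 0 → z ≠ (θ : ℂ) → ‖z‖ < 1

/-- nearest integer, ties so that `x - ⟨x⟩ ∈ (-1/2, 1/2]`. -/
noncomputable def nearestInt (x : ℝ) : ℤ := ⌈x - 1/2⌉

/-- distance to the nearest integer. -/
noncomputable def intDist (x : ℝ) : ℝ := |x - round x|

theorem int_eq_sum_of_abs_sub_le {ι : Type*} (s : Finset ι) (c K : ι → ℤ) (x : ι → ℝ)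
    (x₀ : ℝ) (K₀ : ℤ) (δ : ℝ) (hx₀ : x₀ = ∑ i ∈ s, (c i : ℝ) * x i)
    (h₀ : |x₀ - K₀| ≤ δ) (hK : ∀ i ∈ s, |x i - K i| ≤ δ)
    (hδ : δ < (1 + ∑ i ∈ s, |(c i : ℝ)|)⁻¹) :
    K₀ = ∑ i ∈ s, c i * K i := by
  have hS : 0 < 1 + ∑ i ∈ s, |(c i : ℝ)| := by positivity
  have hN : ((K₀ - ∑ i ∈ s, c i * K i : ℤ) : ℝ)
      = ∑ i ∈ s, (c i : ℝ) * (x i - K i) - (x₀ - K₀) := by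
    simp only [mul_sub, Finset.sum_sub_distrib, ← hx₀]
    push_cast
    ring
  have hbound : |((K₀ - ∑ i ∈ s, c i * K i : ℤ) : ℝ)| < 1 :=
    calc _ ≤ ∑ i ∈ s, |(c i : ℝ)| * δ + δ := by
          rw [hN]
          refine (abs_sub _ _).trans (add_le_add ?_ h₀)
          refine (Finset.abs_sum_le_sum_abs _ _).trans (Finset.sum_le_sum fun i hi => ?_)
          rw [abs_mul]
          exact mul_le_mul_of_nonneg_left (hK i hi) (abs_nonneg _)
      _ = δ * (1 + ∑ i ∈ s, |(c i : ℝ)|) := by rw [← Finset.sum_mul]; ring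
      _ < 1 := by rwa [← one_div, lt_div_iff₀ hS] at hδ
  exact sub_eq_zero.mp (Int.abs_lt_one_iff.mp (by exact_mod_cast hbound))

theorem pow_eq_sum_of_aeval_eq_zero {R : Type*} [CommRing R] {m : ℕ} (θ : R) (d : Fin m → ℤ)
    (h : aeval θ (X ^ m - ∑ i : Fin m, Polynomial.C (d i) * X ^ (m - 1 - (i : ℕ))) = 0) :
    θ ^ m = ∑ i : Fin m, (d i : R) * θ ^ (m - 1 - (i : ℕ)) := by
  simpa [sub_eq_zero] using h

theorem mul_pow_add_eq_sum {R : Type*} [CommRing R] {m : ℕ} (θ y : R) (d : Fin m → ℤ)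
    (hθ : θ ^ m = ∑ i : Fin m, (d i : R) * θ ^ (m - 1 - (i : ℕ))) (j : ℕ) :
    y * θ ^ (j + m) = ∑ i : Fin m, (d i : R) * (y * θ ^ (j + (m - 1 - (i : ℕ)))) := by
  rw [pow_add, hθ, Finset.mul_sum, Finset.mul_sum]
  refine Finset.sum_congr rfl fun i _ => ?_
  rw [pow_add]
  ring

theorem stmt1_general (θ : ℝ) (m : ℕ) (d : Fin m → ℤ)
    (hmin : minpoly ℤ θ = X ^ m - ∑ i : Fin m, Polynomial.C (d i) * X ^ (m - 1 - (i : ℕ)))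
    (δ : ℝ) (hδ : δ < (1 + ∑ i : Fin m, |(d i : ℝ)|)⁻¹)
    (y : ℝ) (A b : ℕ)
    (hsmall : ∀ j : ℕ, A + 1 ≤ j → j ≤ A + b →
      |y * θ ^ j - nearestInt (y * θ ^ j)| ≤ δ) :
    ∀ j : ℕ, A + 1 ≤ j → j ≤ A + b - m →
      nearestInt (y * θ ^ (j + m)) =
        ∑ i : Fin m, d i * nearestInt (y * θ ^ (j + (m - 1 - (i : ℕ)))) := by
  intro j hj₁ hj₂
  have hθ := pow_eq_sum_of_aeval_eq_zero θ d (hmin ▸ minpoly.aeval ℤ θ)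
  exact int_eq_sum_of_abs_sub_le _ d _ _ _ _ δ (mul_pow_add_eq_sum θ y d hθ j)
    (hsmall _ (by omega) (by omega)) (fun i _ => hsmall _ (by omega) (by omega)) hδ

theorem stmt1 (θ : ℝ) (m : ℕ) (hm : 0 < m) (d : Fin m → ℤ)
    (hint : IsIntegral ℤ θ)
    (hmin : minpoly ℤ θ = X ^ m - ∑ i : Fin m, Polynomial.C (d i) * X ^ (m - 1 - (i : ℕ)))
    (δ : ℝ) (hδ0 : 0 < δ) (hδ : δ < (1 + ∑ i : Fin m, |(d i : ℝ)|)⁻¹)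
    (y : ℝ) (hy : 0 < y) (A b : ℕ) (hb : m < b)
    (hsmall : ∀ j : ℕ, A + 1 ≤ j → j ≤ A + b →
      |y * θ ^ j - nearestInt (y * θ ^ j)| ≤ δ) :
    ∀ j : ℕ, A + 1 ≤ j → j ≤ A + b - m →
      nearestInt (y * θ ^ (j + m)) =
        ∑ i : Fin m, d i * nearestInt (y * θ ^ (j + (m - 1 - (i : ℕ)))) :=
  stmt1_general θ m d hmin δ hδ y A b hsmall
end

section
/- For any sequence (x_i) of real numbers with x_i → +∞, the set {α x_i : i ≥ 1} is dense modulo 1 for Lebesgue-almost every real α. -/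
open Real Filter Set MeasureTheory Polynomial ENNReal Topology

/-! For fixed `c` and `ε`, let `B` be the set of `α` such that `α * x i` stays at distance `≥ ε`
from `c` modulo `1` for every `i`. On any interval of length `4 / x i` the map `α ↦ α * x i`
winds around the circle at least once, so a proportion `≥ ε / 2` of the interval misses `B`.
Since `x i → ∞` such intervals shrink to every point, so `B` has no Lebesgue density point and
is null. Letting `c` run over a countable dense set and `ε` over `1 / (n + 1)` gives density of
the orbit for almost every `α`. -/

open Metric

lemma AddCircle.dist_coe_le_abs_sub_sub_intCast (t c : ℝ) (m : ℤ) :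
    dist (t : AddCircle (1 : ℝ)) (c : AddCircle (1 : ℝ)) ≤ |t - c - m| := by
  rw [dist_eq_norm, ← AddCircle.coe_sub, UnitAddCircle.norm_eq]
  exact round_le _ m

theorem measure_eq_zero_of_frequently_measure_inter_closedBall_le {β : Type*} [MetricSpace β]
    [SecondCountableTopology β] [MeasurableSpace β] [BorelSpace β] [HasBesicovitchCovering β]
    (μ : Measure β) [IsLocallyFiniteMeasure μ] {s : Set β} {κ : ℝ≥0∞} (hκ : κ < 1)
    (h : ∀ x, ∃ᶠ r in 𝓝[>] 0, μ (s ∩ closedBall x r) ≤ κ * μ (closedBall x r)) :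
    μ s = 0 := by
  rw [← Measure.restrict_eq_zero, ← ae_eq_bot, ← empty_mem_iff_bot]
  filter_upwards [Besicovitch.ae_tendsto_measure_inter_div μ s] with x hx
  obtain ⟨r, hlt, hle⟩ := ((hx.eventually (lt_mem_nhds hκ)).and_frequently (h x)).exists
  exact hlt.not_ge (ENNReal.div_le_of_le_mul hle)

lemma exists_Ioo_subset_closedBall_dist_lt {X ε : ℝ} (hX : 0 < X) (hε : ε ≤ 1) (c α₀ : ℝ) :
    ∃ a, Ioo a (a + 2 * ε / X) ⊆ closedBall α₀ (2 / X) ∧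
      ∀ y ∈ Ioo a (a + 2 * ε / X), dist ((y * X : ℝ) : AddCircle (1 : ℝ)) c < ε := by
  -- `m` is the least integer with `(c + m - ε) / X ≥ α₀ - 2 / X`, so the interval ends before
  -- `α₀ - 2 / X + (1 + 2 * ε) / X ≤ α₀ + 2 / X`.
  set m : ℤ := ⌈X * (α₀ - 2 / X) - c + ε⌉
  have hm_ge : X * (α₀ - 2 / X) - c + ε ≤ m := Int.le_ceil _
  have hm_lt : (m : ℝ) < X * (α₀ - 2 / X) - c + ε + 1 := Int.ceil_lt_add_one _
  have hXX : X * (2 / X) = 2 := by field_simp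
  have hyX : ∀ y ∈ Ioo ((c + m - ε) / X) ((c + m - ε) / X + 2 * ε / X),
      c + m - ε < y * X ∧ y * X < c + m + ε := by
    rintro y ⟨hy₁, hy₂⟩
    rw [show (c + m - ε) / X + 2 * ε / X = (c + m + ε) / X by ring, lt_div_iff₀ hX] at hy₂
    exact ⟨(div_lt_iff₀ hX).1 hy₁, hy₂⟩
  refine ⟨(c + m - ε) / X, fun y hy => ?_, fun y hy => ?_⟩
  · obtain ⟨hy₁, hy₂⟩ := hyX y hy
    rw [Real.closedBall_eq_Icc]
    constructor <;> nlinarith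
  · obtain ⟨hy₁, hy₂⟩ := hyX y hy
    exact (AddCircle.dist_coe_le_abs_sub_sub_intCast _ c m).trans_lt
      (abs_lt.2 ⟨by linarith, by linarith⟩)

lemma volume_setOf_le_dist_inter_closedBall_le {X ε : ℝ} (hX : 0 < X) (hε₀ : 0 ≤ ε)
    (hε : ε ≤ 1) (c α₀ : ℝ) :
    volume ({α : ℝ | ε ≤ dist ((α * X : ℝ) : AddCircle (1 : ℝ)) c} ∩ closedBall α₀ (2 / X))
      ≤ ENNReal.ofReal (1 - ε / 2) * volume (closedBall α₀ (2 / X)) := by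
  obtain ⟨a, hsub, hnear⟩ := exists_Ioo_subset_closedBall_dist_lt hX hε c α₀
  have hfar : {α : ℝ | ε ≤ dist ((α * X : ℝ) : AddCircle (1 : ℝ)) c} ∩ closedBall α₀ (2 / X)
      ⊆ closedBall α₀ (2 / X) \ Ioo a (a + 2 * ε / X) :=
    fun y ⟨hy, hball⟩ => ⟨hball, fun hI => (hnear y hI).not_ge hy⟩
  calc _ ≤ volume (closedBall α₀ (2 / X) \ Ioo a (a + 2 * ε / X)) := measure_mono hfar
    _ = ENNReal.ofReal (2 * (2 / X)) - ENNReal.ofReal (2 * ε / X) := by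
      rw [measure_sdiff hsub measurableSet_Ioo.nullMeasurableSet measure_Ioo_lt_top.ne,
        Real.volume_closedBall, Real.volume_Ioo, add_sub_cancel_left]
    _ = ENNReal.ofReal ((1 - ε / 2) * (2 * (2 / X))) := by
      rw [← ENNReal.ofReal_sub _ (by positivity)]
      ring_nf
    _ = _ := by rw [ENNReal.ofReal_mul (by linarith), Real.volume_closedBall]

theorem ae_exists_dist_lt_of_tendsto_atTop {x : ℕ → ℝ} (hx : Tendsto x atTop atTop)
    (c : AddCircle (1 : ℝ)) {ε : ℝ} (hε : 0 < ε) :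
    ∀ᵐ α : ℝ, ∃ i, dist ((α * x i : ℝ) : AddCircle (1 : ℝ)) c < ε := by
  wlog hε₁ : ε ≤ 1 generalizing ε
  · filter_upwards [this one_pos le_rfl] with α ⟨i, hi⟩
    exact ⟨i, hi.trans (not_le.1 hε₁)⟩
  induction c using QuotientAddGroup.induction_on with | H c => ?_
  rw [ae_iff]
  simp only [not_exists, not_lt]
  refine measure_eq_zero_of_frequently_measure_inter_closedBall_le volume
    (ENNReal.ofReal_lt_one.2 (by linarith : 1 - ε / 2 < 1)) fun α₀ => ?_
  have hr : Tendsto (fun i => 2 / x i) atTop (𝓝[>] 0) :=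
    tendsto_nhdsWithin_of_tendsto_nhds_of_eventually_within _
      (tendsto_const_nhds.div_atTop hx)
      ((hx.eventually_gt_atTop 0).mono fun i hi => div_pos two_pos hi)
  refine hr.frequently (Eventually.frequently ?_)
  filter_upwards [hx.eventually_gt_atTop 0] with i hi
  refine le_trans (measure_mono (inter_subset_inter_left _ ?_))
    (volume_setOf_le_dist_inter_closedBall_le hi hε.le hε₁ c α₀)
  exact fun α hα => hα i

theorem stmt7 (x : ℕ → ℝ) (hx : Tendsto x atTop atTop) :
    ∀ᵐ α : ℝ ∂volume,
      Dense (Set.range fun i : ℕ => ((α * x i : ℝ) : AddCircle (1 : ℝ))) := by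
  obtain ⟨D, hDc, hD⟩ := TopologicalSpace.exists_countable_dense (AddCircle (1 : ℝ))
  have hnear : ∀ᵐ α : ℝ, ∀ c ∈ D, ∀ n : ℕ,
      ∃ i, dist ((α * x i : ℝ) : AddCircle (1 : ℝ)) c < 1 / (n + 1) := by
    rw [ae_ball_iff hDc]
    exact fun c _ => ae_all_iff.2 fun n =>
      ae_exists_dist_lt_of_tendsto_atTop hx c n.one_div_pos_of_nat
  filter_upwards [hnear] with α hα
  refine dense_closure.1 (hD.mono fun c hc => Metric.mem_closure_iff.2 fun ε hε => ?_)
  obtain ⟨n, hn⟩ := exists_nat_one_div_lt hε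
  obtain ⟨i, hi⟩ := hα c hc n
  exact ⟨_, mem_range_self i, (dist_comm _ _).trans_lt (hi.trans hn)⟩
end

section
/- Let θ > 1 be a Pisot number with θ ≠ 2, Λ ∈ ℤ[θ], and define φ_Λ(q) = ∏_{j=-∞}^∞ cos(2π Λ q θ^j) for q ∈ ℤ[θ]. Then for any a, b ∈ ℤ[θ], φ_Λ(a + b θ^n) → φ_Λ(a)·φ_Λ(b) as n → +∞. -/
open Real Filter Set MeasureTheory Polynomial ENNReal Topology

/-! For `q ∈ ℤ[θ]` the distance `intDist (q θ^j)` is summable over `j ∈ ℤ`: for `j < 0` since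
`q θ^j` itself decays, and for `j ≥ 0` since the trace of `q θ^j` is an integer differing from
`q θ^j` by its images under the other embeddings, which decay geometrically because the other
conjugates of `θ` lie in the unit disc.

With `x j = Λ a θ^j` and `y j = Λ b θ^j`, shifting the second product gives
`φ(a) φ(b) = ∏ cos (2π x j) cos (2π y (j + n))`, whose factors differ from those of
`φ(a + b θ^n) = ∏ cos (2π (x j + y (j + n)))` by `sin (2π x j) sin (2π y (j + n))`. These
differences are dominated by `2π intDist (x j)` and tend to `0` as `n → ∞`, so their sum tends
to `0` by dominated convergence; for factors in `[-1, 1]` it bounds the difference of the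
products. -/

lemma intDist_nonneg (x : ℝ) : 0 ≤ intDist x := abs_nonneg _

lemma intDist_le_abs_sub (x : ℝ) (m : ℤ) : intDist x ≤ |x - m| := round_le x m

lemma intDist_le_abs (x : ℝ) : intDist x ≤ |x| := by
  simpa using intDist_le_abs_sub x 0

lemma intDist_add_le (x y : ℝ) : intDist (x + y) ≤ intDist x + intDist y :=
  calc intDist (x + y) ≤ |(x - round x) + (y - round y)| := by
        simpa [add_sub_add_comm] using intDist_le_abs_sub (x + y) (round x + round y)
    _ ≤ intDist x + intDist y := abs_add_le _ _

lemma abs_two_pi_mul_sub_round (x : ℝ) : |2 * π * (x - round x)| = 2 * π * intDist x := by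
  rw [abs_mul, abs_of_pos two_pi_pos, intDist]

lemma two_pi_mul_eq_sub_round (x : ℝ) :
    2 * π * x = 2 * π * (x - round x) + round x * (2 * π) := by ring

lemma abs_sin_two_pi_mul_le (x : ℝ) : |sin (2 * π * x)| ≤ 2 * π * intDist x := by
  rw [two_pi_mul_eq_sub_round, sin_add_int_mul_two_pi, ← abs_two_pi_mul_sub_round]
  exact abs_sin_le_abs

lemma abs_cos_two_pi_mul_sub_one_le (x : ℝ) : |cos (2 * π * x) - 1| ≤ 2 * π * intDist x := by
  rw [two_pi_mul_eq_sub_round, cos_add_int_mul_two_pi, ← abs_two_pi_mul_sub_round]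
  simpa using abs_cos_sub_cos_le (2 * π * (x - round x)) 0

lemma multipliable_cos_two_pi_mul {ι : Type*} {x : ι → ℝ}
    (hx : Summable fun i ↦ intDist (x i)) : Multipliable fun i ↦ cos (2 * π * x i) := by
  have hsum : Summable fun i ↦ ‖cos (2 * π * x i) - 1‖ :=
    (hx.mul_left (2 * π)).of_nonneg_of_le (fun _ ↦ norm_nonneg _)
      fun i ↦ abs_cos_two_pi_mul_sub_one_le (x i)
  simpa using multipliable_one_add_of_summable hsum

section NormProdSub

variable {ι R : Type*} [NormedCommRing R] [NormOneClass R]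

lemma Finset.norm_prod_sub_prod_le {f g : ι → R} (hf : ∀ i, ‖f i‖ ≤ 1)
    (hg : ∀ i, ‖g i‖ ≤ 1) (s : Finset ι) :
    ‖∏ i ∈ s, f i - ∏ i ∈ s, g i‖ ≤ ∑ i ∈ s, ‖f i - g i‖ := by
  classical
  induction s using Finset.induction with
  | empty => simp
  | insert i s hi ih =>
    rw [Finset.prod_insert hi, Finset.prod_insert hi, Finset.sum_insert hi]
    have hgs : ‖∏ j ∈ s, g j‖ ≤ 1 := (Finset.norm_prod_le s g).trans
      (Finset.prod_le_one (fun _ _ ↦ norm_nonneg _) fun j _ ↦ hg j)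
    calc ‖f i * ∏ j ∈ s, f j - g i * ∏ j ∈ s, g j‖
        = ‖f i * (∏ j ∈ s, f j - ∏ j ∈ s, g j) + (f i - g i) * ∏ j ∈ s, g j‖ := by ring_nf
      _ ≤ ‖f i‖ * ‖∏ j ∈ s, f j - ∏ j ∈ s, g j‖ + ‖f i - g i‖ * ‖∏ j ∈ s, g j‖ :=
        (norm_add_le _ _).trans (add_le_add (norm_mul_le _ _) (norm_mul_le _ _))
      _ ≤ 1 * ∑ j ∈ s, ‖f j - g j‖ + ‖f i - g i‖ * 1 := by gcongr; exact hf i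
      _ = ‖f i - g i‖ + ∑ j ∈ s, ‖f j - g j‖ := by ring

lemma norm_tprod_sub_tprod_le {f g : ι → R} (hf : ∀ i, ‖f i‖ ≤ 1) (hg : ∀ i, ‖g i‖ ≤ 1)
    (hfm : Multipliable f) (hgm : Multipliable g) (hfg : Summable fun i ↦ ‖f i - g i‖) :
    ‖∏' i, f i - ∏' i, g i‖ ≤ ∑' i, ‖f i - g i‖ :=
  le_of_tendsto (hfm.hasProd.sub hgm.hasProd).norm <| Eventually.of_forall fun s ↦
    (Finset.norm_prod_sub_prod_le hf hg s).trans (hfg.sum_le_tsum s fun _ _ ↦ norm_nonneg _)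

end NormProdSub

lemma Summable.tendsto_comp_add_natCast_atTop_zero {G : Type*} [AddCommGroup G]
    [TopologicalSpace G] [IsTopologicalAddGroup G] {f : ℤ → G} (hf : Summable f) (j : ℤ) :
    Tendsto (fun n : ℕ ↦ f (j + n)) atTop (𝓝 0) := by
  refine hf.tendsto_cofinite_zero.comp ?_
  rw [Int.cofinite_eq]
  exact (tendsto_atTop_add_const_left _ j tendsto_natCast_atTop_atTop).mono_right le_sup_right

theorem tendsto_tprod_cos_two_pi_mul_add_shift {x y : ℤ → ℝ}
    (hx : Summable fun j ↦ intDist (x j)) (hy : Summable fun j ↦ intDist (y j)) :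
    Tendsto (fun n : ℕ ↦ ∏' j, cos (2 * π * (x j + y (j + n)))) atTop
      (𝓝 ((∏' j, cos (2 * π * x j)) * ∏' j, cos (2 * π * y j))) := by
  have hy_shift (n : ℕ) : Summable fun j ↦ intDist (y (j + n)) :=
    (Equiv.addRight (n : ℤ)).summable_iff.2 hy
  have hprod_shift (n : ℕ) : (∏' j, cos (2 * π * x j)) * ∏' j, cos (2 * π * y j) =
      ∏' j, cos (2 * π * x j) * cos (2 * π * y (j + n)) := by
    rw [← (Equiv.addRight (n : ℤ)).tprod_eq fun j ↦ cos (2 * π * y j)]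
    exact ((multipliable_cos_two_pi_mul hx).tprod_mul
      (multipliable_cos_two_pi_mul (hy_shift n))).symm
  have hdiff (n : ℕ) (j : ℤ) : ‖cos (2 * π * (x j + y (j + n))) -
      cos (2 * π * x j) * cos (2 * π * y (j + n))‖ =
        |sin (2 * π * x j)| * |sin (2 * π * y (j + n))| := by
    rw [mul_add, cos_add, Real.norm_eq_abs, sub_sub_cancel_left, abs_neg, abs_mul]
  have hbound (n : ℕ) (j : ℤ) :
      ‖|sin (2 * π * x j)| * |sin (2 * π * y (j + n))|‖ ≤ 2 * π * intDist (x j) := by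
    rw [Real.norm_eq_abs, abs_mul, abs_abs, abs_abs]
    exact (mul_le_of_le_one_right (abs_nonneg _) (abs_sin_le_one _)).trans
      (abs_sin_two_pi_mul_le _)
  have hsin_shift (j : ℤ) : Tendsto (fun n : ℕ ↦ |sin (2 * π * y (j + n))|) atTop (𝓝 0) := by
    refine squeeze_zero (fun _ ↦ abs_nonneg _) (fun n ↦ abs_sin_two_pi_mul_le _) ?_
    simpa using (hy.tendsto_comp_add_natCast_atTop_zero j).const_mul (2 * π)
  have hsmall : Tendsto (fun n : ℕ ↦ ∑' j, |sin (2 * π * x j)| * |sin (2 * π * y (j + n))|)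
      atTop (𝓝 0) := by
    simpa using tendsto_tsum_of_dominated_convergence (hx.mul_left (2 * π))
      (fun j ↦ (hsin_shift j).const_mul |sin (2 * π * x j)|) (Eventually.of_forall hbound)
  rw [tendsto_iff_norm_sub_tendsto_zero]
  refine squeeze_zero (fun _ ↦ norm_nonneg _) (fun n ↦ ?_) hsmall
  rw [hprod_shift n, ← funext (hdiff n)]
  refine norm_tprod_sub_tprod_le (fun _ ↦ abs_cos_le_one _)
    (fun _ ↦ by
      rw [norm_mul]
      exact mul_le_one₀ (abs_cos_le_one _) (norm_nonneg _) (abs_cos_le_one _))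
    (multipliable_cos_two_pi_mul ?_)
    ((multipliable_cos_two_pi_mul hx).mul (multipliable_cos_two_pi_mul (hy_shift n))) ?_
  · exact (hx.add (hy_shift n)).of_nonneg_of_le (fun _ ↦ intDist_nonneg _)
      fun j ↦ intDist_add_le _ _
  · simpa only [hdiff] using (hx.mul_left (2 * π)).of_norm_bounded (hbound n)

lemma intDist_le_norm_of_add_eq_intCast {t : ℝ} {w : ℂ} {m : ℤ} (h : (t : ℂ) + w = m) :
    intDist t ≤ ‖w‖ := by
  have : ((t - m : ℝ) : ℂ) = -w := by push_cast; rw [← h]; ring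
  rw [← norm_neg, ← this, Complex.norm_real, Real.norm_eq_abs]
  exact intDist_le_abs_sub t m

lemma exists_sum_algHom_apply_eq_intCast {K : Type*} [Field K] [Algebra ℚ K]
    [FiniteDimensional ℚ K] {y : K} (hy : IsIntegral ℤ y) :
    ∃ m : ℤ, ∑ σ : K →ₐ[ℚ] ℂ, σ y = m := by
  obtain ⟨m, hm⟩ :=
    IsIntegrallyClosed.isIntegral_iff.mp (Algebra.isIntegral_trace (L := ℚ) hy)
  refine ⟨m, ?_⟩
  rw [← trace_eq_sum_embeddings ℂ (K := ℚ), ← hm]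
  simp

section AdjoinPisot

open IntermediateField

variable {θ : ℝ} (hint : IsIntegral ℤ θ)
  (hconj : ∀ z : ℂ, aeval z (minpoly ℤ θ) = 0 → z ≠ (θ : ℂ) → ‖z‖ < 1)
include hint hconj

lemma norm_algHom_gen_lt_one {σ : ℚ⟮θ⟯ →ₐ[ℚ] ℂ}
    (hσ : σ ≠ (Complex.ofRealAm.restrictScalars ℚ).comp (val ℚ⟮θ⟯)) :
    ‖σ (AdjoinSimple.gen ℚ θ)‖ < 1 := by
  refine hconj _ ?_ fun h ↦ hσ (adjoin_algHom_ext ℚ fun x hx ↦ ?_)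
  · rw [← aeval_map_algebraMap ℚ, ← minpoly.isIntegrallyClosed_eq_field_fractions ℚ ℝ hint,
      Algebra.algebraMap_self_apply, ← minpoly_gen]
    exact minpoly.aeval_algHom ℚ σ _
  · rw [Set.mem_singleton_iff] at hx
    subst hx
    exact h

lemma summable_intDist_mul_pow {q : ℝ} (hq : q ∈ Algebra.adjoin ℤ {θ}) :
    Summable fun j : ℕ ↦ intDist (q * θ ^ j) := by
  classical
  have : FiniteDimensional ℚ ℚ⟮θ⟯ := adjoin.finiteDimensional hint.tower_top
  set σ₀ : ℚ⟮θ⟯ →ₐ[ℚ] ℂ := (Complex.ofRealAm.restrictScalars ℚ).comp (val ℚ⟮θ⟯)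
  set ξ := AdjoinSimple.gen ℚ θ
  have hq_mem : q ∈ ℚ⟮θ⟯ := by
    refine Algebra.adjoin_le (S := ℚ⟮θ⟯.toSubalgebra.restrictScalars ℤ) ?_ hq
    simp
  set x : ℚ⟮θ⟯ := ⟨q, hq_mem⟩
  obtain ⟨hx_int, hξ_int⟩ : IsIntegral ℤ x ∧ IsIntegral ℤ ξ := by
    simp only [← isIntegral_algHom_iff ((val ℚ⟮θ⟯).restrictScalars ℤ) Subtype.val_injective]
    exact ⟨adjoin_le_integralClosure hint hq, hint⟩
  choose m hm using fun j : ℕ ↦ exists_sum_algHom_apply_eq_intCast (hx_int.mul (hξ_int.pow j))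
  have hdecomp (j : ℕ) :
      ((q * θ ^ j : ℝ) : ℂ) + ∑ σ ∈ Finset.univ.erase σ₀, σ x * σ ξ ^ j = m j := by
    rw [← hm j, ← Finset.add_sum_erase _ _ (Finset.mem_univ σ₀)]
    simp only [map_mul, map_pow, Complex.ofReal_mul, Complex.ofReal_pow]
    rfl
  refine Summable.of_nonneg_of_le (fun _ ↦ intDist_nonneg _)
    (fun j ↦ (intDist_le_norm_of_add_eq_intCast (hdecomp j)).trans (norm_sum_le _ _))
    (summable_sum fun σ hσ ↦ ?_)
  simp only [norm_mul, norm_pow]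
  exact (summable_geometric_of_lt_one (norm_nonneg _)
    (norm_algHom_gen_lt_one hint hconj (Finset.ne_of_mem_erase hσ))).mul_left _

end AdjoinPisot

lemma IsPisot.summable_intDist_mul_zpow {θ q : ℝ} (hθ : IsPisot θ)
    (hq : q ∈ Algebra.adjoin ℤ {θ}) : Summable fun j : ℤ ↦ intDist (q * θ ^ j) := by
  obtain ⟨hθ_gt, hint, hconj⟩ := hθ
  have hθ_inv : 0 < θ⁻¹ := inv_pos.2 (zero_lt_one.trans hθ_gt)
  refine .of_nat_of_neg (by simpa using summable_intDist_mul_pow hint hconj hq) ?_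
  refine Summable.of_nonneg_of_le (fun _ ↦ intDist_nonneg _)
    (fun n ↦ (intDist_le_abs _).trans_eq ?_)
    ((summable_geometric_of_lt_one hθ_inv.le (inv_lt_one_of_one_lt₀ hθ_gt)).mul_left |q|)
  rw [zpow_neg, zpow_natCast, ← inv_pow, abs_mul, abs_pow, abs_of_pos hθ_inv]

theorem stmt13_general (θ : ℝ) (hθ : IsPisot θ) (Λ a b : ℝ)
    (hΛ : Λ ∈ Algebra.adjoin ℤ {θ}) (ha : a ∈ Algebra.adjoin ℤ {θ})
    (hb : b ∈ Algebra.adjoin ℤ {θ}) :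
    Tendsto (fun n : ℕ => ∏' j : ℤ, Real.cos (2 * π * Λ * (a + b * θ ^ n) * θ ^ j)) atTop
      (𝓝 ((∏' j : ℤ, Real.cos (2 * π * Λ * a * θ ^ j)) *
        ∏' j : ℤ, Real.cos (2 * π * Λ * b * θ ^ j))) := by
  have hθ0 : θ ≠ 0 := (zero_lt_one.trans hθ.1).ne'
  convert tendsto_tprod_cos_two_pi_mul_add_shift (hθ.summable_intDist_mul_zpow (mul_mem hΛ ha))
    (hθ.summable_intDist_mul_zpow (mul_mem hΛ hb)) using 4 with n j
  · rw [zpow_add₀ hθ0, zpow_natCast]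
    ring_nf
  all_goals simp only [mul_assoc]

theorem stmt13 (θ : ℝ) (hθ : IsPisot θ) (hθ2 : θ ≠ 2) (Λ a b : ℝ)
    (hΛ : Λ ∈ Algebra.adjoin ℤ {θ}) (ha : a ∈ Algebra.adjoin ℤ {θ})
    (hb : b ∈ Algebra.adjoin ℤ {θ}) :
    Tendsto (fun n : ℕ => ∏' j : ℤ, Real.cos (2 * π * Λ * (a + b * θ ^ n) * θ ^ j)) atTop
      (𝓝 ((∏' j : ℤ, Real.cos (2 * π * Λ * a * θ ^ j)) *
        ∏' j : ℤ, Real.cos (2 * π * Λ * b * θ ^ j))) :=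
  stmt13_general θ hθ Λ a b hΛ ha hb
end

section
/- Let θ > 1 be a Pisot number and ξ ∈ ℚ(θ). Then the sequence {‖ξ θ^n‖ : n ∈ ℕ} of distances to the nearest integer has only finitely many limit points. -/
open Real Filter Set MeasureTheory Polynomial ENNReal Topology

/-!
Pick `Q > 0` with `Q ξ` an algebraic integer. Then the trace `t n` of `Q ξ θⁿ` over `ℚ(θ)` is a
rational integer. It is the sum of the conjugates of `Q ξ θⁿ`; all of them except `Q ξ θⁿ` itself
carry a power of a conjugate of `θ` of modulus `< 1`, so `Q ξ θⁿ - t n → 0`. Hence `‖ξ θⁿ‖` is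
asymptotic to `‖t n / Q‖`, which takes at most `Q` values, and these are the only possible limit
points.
-/

lemma intDist_add_intCast (x : ℝ) (m : ℤ) : intDist (x + m) = intDist x := by
  simp only [intDist, round_add_intCast, Int.cast_add]
  ring_nf

lemma abs_intDist_sub_intDist_le (x y : ℝ) : |intDist x - intDist y| ≤ |x - y| := by
  have key : ∀ a b : ℝ, intDist a ≤ |a - b| + intDist b := fun a b =>
    calc intDist a ≤ |a - round b| := round_le a (round b)
      _ = |(a - b) + (b - round b)| := by ring_nf
      _ ≤ |a - b| + intDist b := abs_add_le _ _
  rw [abs_sub_le_iff]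
  constructor
  · linarith [key x y]
  · linarith [key y x, abs_sub_comm x y]

lemma intDist_intCast_div_mem_image {Q : ℤ} (hQ : 0 < Q) (t : ℤ) :
    intDist (t / Q) ∈ (fun j : ℤ => intDist (j / Q)) '' Set.Ico 0 Q := by
  refine ⟨t % Q, ⟨Int.emod_nonneg _ hQ.ne', Int.emod_lt_of_pos _ hQ⟩, ?_⟩
  have hQ' : (Q : ℝ) ≠ 0 := by exact_mod_cast hQ.ne'
  have hsplit : (t / Q : ℝ) = ((t % Q : ℤ) : ℝ) / Q + ((t / Q : ℤ) : ℝ) := by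
    conv_lhs => rw [← Int.emod_add_mul_ediv t Q]
    push_cast
    field_simp
  simp only [hsplit, intDist_add_intCast]

lemma mem_of_mapClusterPt_of_tendsto_dist {X : Type*} [PseudoMetricSpace X] {f g : ℕ → X}
    {S : Set X} (hS : IsClosed S) (hg : ∀ n, g n ∈ S)
    (hfg : Tendsto (fun n => dist (f n) (g n)) atTop (𝓝 0)) {a : X}
    (ha : MapClusterPt a atTop f) : a ∈ S := by
  obtain ⟨ψ, hψ, hfψ⟩ := ha.tendsto_subseq
  have hgψ : Tendsto (g ∘ ψ) atTop (𝓝 a) :=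
    hfψ.congr_dist (hfg.comp hψ.tendsto_atTop)
  exact hS.mem_of_tendsto hgψ (Eventually.of_forall fun n => hg (ψ n))

lemma finite_setOf_mapClusterPt_intDist {x : ℕ → ℝ} {Q : ℤ} (hQ : 0 < Q) {t : ℕ → ℤ}
    (ht : Tendsto (fun n => Q * x n - t n) atTop (𝓝 0)) :
    {a : ℝ | MapClusterPt a atTop fun n => intDist (x n)}.Finite := by
  have hS : ((fun j : ℤ => intDist (j / Q)) '' Set.Ico 0 Q).Finite :=
    (Set.finite_Ico 0 Q).image _
  refine hS.subset fun a ha => mem_of_mapClusterPt_of_tendsto_dist hS.isClosed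
    (fun n => intDist_intCast_div_mem_image hQ (t n)) ?_ ha
  have hQ' : (Q : ℝ) ≠ 0 := by exact_mod_cast hQ.ne'
  have hdiv : Tendsto (fun n => |x n - t n / Q|) atTop (𝓝 0) := by
    have := (ht.const_mul (Q : ℝ)⁻¹).abs
    simp only [mul_zero, abs_zero] at this
    refine this.congr fun n => ?_
    congr 1
    field_simp
  exact squeeze_zero (fun _ => dist_nonneg) (fun n => abs_intDist_sub_intDist_le _ _) hdiv

section Trace

variable {K : Type*} [Field K] [Algebra ℚ K]

lemma exists_pos_isIntegral_intCast_mul [Algebra.IsAlgebraic ℚ K] (ξ : K) :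
    ∃ Q : ℤ, 0 < Q ∧ IsIntegral ℤ ((Q : K) * ξ) := by
  obtain ⟨q, hq, hqξ⟩ := ((IsFractionRing.isAlgebraic_iff ℤ ℚ K).2
    (Algebra.IsAlgebraic.isAlgebraic ξ)).exists_integral_multiple
  refine ⟨q * q, mul_self_pos.2 hq, ?_⟩
  have hQξ : ((q * q : ℤ) : K) * ξ = q • q • ξ := by
    simp only [zsmul_eq_mul, Int.cast_mul, mul_assoc]
  exact hQξ ▸ hqξ.smul q

variable [FiniteDimensional ℚ K]

lemma tendsto_embedding_mul_pow_sub_trace (σ₀ : K →ₐ[ℚ] ℂ) {α : K}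
    (hα : ∀ σ : K →ₐ[ℚ] ℂ, σ ≠ σ₀ → ‖σ α‖ < 1) (β : K) :
    Tendsto (fun n : ℕ => σ₀ (β * α ^ n) - algebraMap ℚ ℂ (Algebra.trace ℚ K (β * α ^ n)))
      atTop (𝓝 0) := by
  classical
  have hsum : ∀ n : ℕ, σ₀ (β * α ^ n) - algebraMap ℚ ℂ (Algebra.trace ℚ K (β * α ^ n)) =
      -∑ σ ∈ Finset.univ.erase σ₀, σ β * σ α ^ n := by
    intro n
    rw [trace_eq_sum_embeddings, ← Finset.add_sum_erase _ _ (Finset.mem_univ σ₀)]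
    simp only [map_mul, map_pow]
    ring
  simp_rw [hsum]
  have := tendsto_finsetSum (Finset.univ.erase σ₀) fun σ hσ =>
    (tendsto_pow_atTop_nhds_zero_of_norm_lt_one (hα σ (Finset.ne_of_mem_erase hσ))).const_mul (σ β)
  simpa using this.neg

lemma exists_tendsto_embedding_mul_pow_sub_intCast (σ₀ : K →ₐ[ℚ] ℂ) {α β : K}
    (hα : ∀ σ : K →ₐ[ℚ] ℂ, σ ≠ σ₀ → ‖σ α‖ < 1) (hαℤ : IsIntegral ℤ α) (hβℤ : IsIntegral ℤ β) :
    ∃ t : ℕ → ℤ, Tendsto (fun n : ℕ => σ₀ (β * α ^ n) - t n) atTop (𝓝 0) := by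
  choose t ht using fun n : ℕ => IsIntegrallyClosed.isIntegral_iff.1
    (Algebra.isIntegral_trace (L := ℚ) (hβℤ.mul (hαℤ.pow n)))
  refine ⟨t, (tendsto_embedding_mul_pow_sub_trace σ₀ hα β).congr fun n => ?_⟩
  rw [← ht n]
  simp

end Trace

noncomputable def IntermediateField.complexInclusion (K : IntermediateField ℚ ℝ) : K →ₐ[ℚ] ℂ :=
  (Complex.ofRealAm.restrictScalars ℚ).comp K.val

@[simp]
lemma IntermediateField.complexInclusion_apply (K : IntermediateField ℚ ℝ) (x : K) :
    K.complexInclusion x = ((x : ℝ) : ℂ) :=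
  rfl

namespace IsPisot

open IntermediateField

variable {θ : ℝ}

lemma norm_embedding_gen_lt_one (hθ : IsPisot θ) (σ : ℚ⟮θ⟯ →ₐ[ℚ] ℂ)
    (hσ : σ ≠ complexInclusion ℚ⟮θ⟯) : ‖σ (AdjoinSimple.gen ℚ θ)‖ < 1 := by
  obtain ⟨-, hθℤ, hconj⟩ := hθ
  apply hconj
  · have hroot : aeval (σ (AdjoinSimple.gen ℚ θ)) (minpoly ℚ θ) = 0 := by
      have hgen : aeval (AdjoinSimple.gen ℚ θ) (minpoly ℚ θ) = 0 := by
        rw [← minpoly_gen]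
        exact minpoly.aeval _ _
      rw [aeval_algHom_apply, hgen, map_zero]
    rwa [minpoly.isIntegrallyClosed_eq_field_fractions' ℚ hθℤ, aeval_map_algebraMap] at hroot
  · intro hσθ
    refine hσ (adjoin_algHom_ext ℚ fun y hy => ?_)
    rcases Set.mem_singleton_iff.1 hy with rfl
    exact hσθ

lemma exists_tendsto_mul_pow_sub_intCast (hθ : IsPisot θ) {ξ : ℝ}
    (hξ : ξ ∈ Algebra.adjoin ℚ {θ}) :
    ∃ Q : ℤ, 0 < Q ∧ ∃ t : ℕ → ℤ, Tendsto (fun n : ℕ => Q * (ξ * θ ^ n) - t n) atTop (𝓝 0) := by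
  have hθℤ : IsIntegral ℤ θ := hθ.2.1
  have hθℚ : IsIntegral ℚ θ := hθℤ.tower_top
  have : FiniteDimensional ℚ ℚ⟮θ⟯ := adjoin.finiteDimensional hθℚ
  rw [← adjoin_simple_toSubalgebra_of_isAlgebraic hθℚ.isAlgebraic] at hξ
  set ξK : ℚ⟮θ⟯ := ⟨ξ, hξ⟩
  obtain ⟨Q, hQ, hQξ⟩ := exists_pos_isIntegral_intCast_mul ξK
  have hθK : IsIntegral ℤ (AdjoinSimple.gen ℚ θ) := by
    rw [← isIntegral_algebraMap_iff (algebraMap ℚ⟮θ⟯ ℝ).injective, AdjoinSimple.algebraMap_gen]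
    exact hθℤ
  obtain ⟨t, ht⟩ := exists_tendsto_embedding_mul_pow_sub_intCast (complexInclusion ℚ⟮θ⟯)
    hθ.norm_embedding_gen_lt_one hθK hQξ
  refine ⟨Q, hQ, t, ?_⟩
  have := (Complex.continuous_re.tendsto 0).comp ht
  simpa [Function.comp_def, ξK, ← Complex.ofReal_pow, mul_assoc] using this

end IsPisot

theorem stmt17 (θ : ℝ) (hθ : IsPisot θ) (ξ : ℝ) (hξ : ξ ∈ Algebra.adjoin ℚ {θ}) :
    {a : ℝ | MapClusterPt a atTop fun n : ℕ => intDist (ξ * θ ^ n)}.Finite := by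
  obtain ⟨Q, hQ, t, ht⟩ := hθ.exists_tendsto_mul_pow_sub_intCast hξ
  exact finite_setOf_mapClusterPt_intDist hQ ht
end

section
/- Let θ > 1 be a Pisot number with θ ≠ 2 and suppose μ̂_θ(t) ↛ 0 as t → +∞ over the reals. Then also μ̂_θ(n) ↛ 0 as n → +∞ over the integers. -/
open Real Filter Set MeasureTheory Polynomial ENNReal Topology

/-!
If `|μ̂_θ(t)| ≥ η` for arbitrarily large `t`, then, since `|μ̂_θ|` can only grow when its argument
is divided by `θ`, a compactness argument gives `u > 0` with `|μ̂_θ(θ^m u)| ≥ η` for all `m ∈ ℤ`.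
As `μ̂_θ(θ^m u)` has the factors `cos (π x_j)`, `x_j = 2 θ^j u`, `j ≤ m`, this forces
`∑ ‖x_j‖² < ∞`. If infinitely many `x_j` are closest to an even integer, the points `θ^j u` lie
near integers `p`, and `μ̂_θ` being Lipschitz gives `|μ̂_θ(p)| ≥ η / 2`. Otherwise the `x_j` are
eventually near odd integers, so `θ^j v` with `v = (1 + θ^q) u` lies near the integer
`(x_j + x_{j+q}) / 2`. For `q` large no factor of `μ̂_θ(θ^j v)` vanishes, and square-summability
keeps `|μ̂_θ(θ^j v)|` bounded below, which again produces integers `n` with `|μ̂_θ(n)|` bounded below.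
-/

lemma abs_prod_sub_prod_le {ι : Type*} (s : Finset ι) {f g : ι → ℝ}
    (hf : ∀ i ∈ s, |f i| ≤ 1) (hg : ∀ i ∈ s, |g i| ≤ 1) :
    |∏ i ∈ s, f i - ∏ i ∈ s, g i| ≤ ∑ i ∈ s, |f i - g i| := by
  classical
  induction s using Finset.induction_on with
  | empty => simp
  | insert a s ha ih =>
    simp only [Finset.forall_mem_insert] at hf hg
    have hfs : |∏ i ∈ s, f i| ≤ 1 := by
      rw [Finset.abs_prod]
      exact Finset.prod_le_one (fun _ _ => abs_nonneg _) hf.2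
    rw [Finset.prod_insert ha, Finset.prod_insert ha, Finset.sum_insert ha]
    calc |f a * ∏ i ∈ s, f i - g a * ∏ i ∈ s, g i|
        = |(f a - g a) * ∏ i ∈ s, f i + g a * (∏ i ∈ s, f i - ∏ i ∈ s, g i)| := by ring_nf
      _ ≤ |f a - g a| * 1 + 1 * ∑ i ∈ s, |f i - g i| := by
        refine (abs_add_le _ _).trans ?_
        rw [abs_mul, abs_mul]
        gcongr
        · exact hg.1
        · exact ih hf.2 hg.2
      _ = _ := by ring

lemma one_sub_sum_le_prod_one_sub {ι : Type*} (s : Finset ι) {a : ι → ℝ}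
    (h0 : ∀ i ∈ s, 0 ≤ a i) (h1 : ∀ i ∈ s, a i ≤ 1) :
    1 - ∑ i ∈ s, a i ≤ ∏ i ∈ s, (1 - a i) := by
  classical
  induction s using Finset.induction_on with
  | empty => simp
  | insert b s hb ih =>
    simp only [Finset.forall_mem_insert] at h0 h1
    rw [Finset.prod_insert hb, Finset.sum_insert hb]
    have hS : 0 ≤ ∑ i ∈ s, a i := Finset.sum_nonneg h0.2
    nlinarith [ih h0.2 h1.2]

lemma abs_cos_add_int_mul_pi (x : ℝ) (n : ℤ) : |cos (x + n * π)| = |cos x| := by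
  simp [cos_add_int_mul_pi, abs_mul]

lemma abs_cos_sub_le_abs_cos_add (a b : ℝ) : |cos a| - |b| ≤ |cos (a + b)| := by
  have := abs_cos_sub_cos_le a (a + b)
  have := abs_sub_abs_le_abs_sub (cos a) (cos (a + b))
  rw [sub_add_cancel_left, abs_neg] at *
  linarith

lemma intDist_le_half (x : ℝ) : intDist x ≤ 1 / 2 := abs_sub_round x

lemma abs_cos_pi_mul (x : ℝ) : |cos (π * x)| = cos (π * intDist x) := by
  have hsplit : π * x = π * (x - round x) + (round x : ℤ) * π := by ring
  have hd := abs_le.mp (intDist_le_half x)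
  rw [hsplit, abs_cos_add_int_mul_pi, intDist, ← abs_of_pos pi_pos, ← abs_mul, cos_abs,
    abs_of_pos pi_pos]
  refine abs_of_nonneg (cos_nonneg_of_mem_Icc ⟨?_, ?_⟩) <;> nlinarith [pi_pos]

lemma abs_cos_pi_mul_sub_le (x y : ℝ) :
    |cos (π * x)| - π * intDist y ≤ |cos (π * (x + y))| := by
  have hsplit : π * (x + y) = π * x + π * (y - round y) + (round y : ℤ) * π := by ring
  rw [hsplit, abs_cos_add_int_mul_pi, intDist, ← abs_of_pos pi_pos, ← abs_mul, abs_of_pos pi_pos]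
  exact abs_cos_sub_le_abs_cos_add _ _

lemma cos_pi_mul_intDist_le (x : ℝ) : cos (π * intDist x) ≤ 1 - 2 * intDist x ^ 2 := by
  have hd : |π * intDist x| ≤ π := by
    rw [abs_of_nonneg (mul_nonneg pi_pos.le (intDist_nonneg x))]
    nlinarith [pi_pos, intDist_le_half x]
  have := cos_le_one_sub_mul_cos_sq hd
  field_simp at this ⊢
  nlinarith [pi_pos]

lemma one_sub_le_cos_two_pi_mul (y : ℝ) : 1 - 2 * π ^ 2 * intDist y ^ 2 ≤ cos (2 * π * y) := by
  have hsplit : 2 * π * y = 2 * π * (y - round y) + (round y : ℤ) * (2 * π) := by ring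
  rw [hsplit, cos_add_int_mul_two_pi, intDist, sq_abs]
  convert one_sub_sq_div_two_le_cos (x := 2 * π * (y - round y)) using 1
  ring

lemma intDist_half_add_le {x y : ℝ} (h : Even (round x + round y)) :
    intDist ((x + y) / 2) ≤ (intDist x + intDist y) / 2 := by
  obtain ⟨c, hc⟩ := h
  have hc' : (round x : ℝ) + round y = 2 * c := by exact_mod_cast hc.trans (two_mul c).symm
  calc intDist ((x + y) / 2) ≤ |(x + y) / 2 - c| := round_le _ c
    _ = |(x - round x) + (y - round y)| / 2 := by
      rw [← abs_of_pos (two_pos : (0:ℝ) < 2), ← abs_div]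
      congr 1
      linear_combination hc' / 2
    _ ≤ _ := by
      gcongr
      exact abs_add_le _ _

lemma exists_frequently_le_abs_of_not_tendsto {α : Type*} {l : Filter α} {f : α → ℝ}
    (h : ¬ Tendsto f l (𝓝 0)) : ∃ η > 0, ∃ᶠ t in l, η ≤ |f t| := by
  obtain ⟨s, hs, hfreq⟩ := not_tendsto_iff_exists_frequently_notMem.mp h
  obtain ⟨η, hη, hball⟩ := Metric.mem_nhds_iff.mp hs
  refine ⟨η, hη, hfreq.mono fun t ht => ?_⟩
  by_contra! hlt
  exact ht (hball (by simpa [Real.dist_eq] using hlt))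

lemma summable_intDist_sq_of_le_prod_abs_cos {x : ℕ → ℝ} {η : ℝ} (hη : 0 < η)
    (h : ∀ n, η ≤ ∏ j ∈ Finset.range n, |cos (π * x j)|) :
    Summable fun j => intDist (x j) ^ 2 := by
  refine summable_of_sum_range_le (c := -log η / 2) (fun _ => sq_nonneg _) fun n => ?_
  have hprod : ∏ j ∈ Finset.range n, |cos (π * x j)|
      ≤ exp (-(2 * ∑ j ∈ Finset.range n, intDist (x j) ^ 2)) := by
    rw [Finset.mul_sum, ← Finset.sum_neg_distrib, exp_sum]
    refine Finset.prod_le_prod (fun _ _ => abs_nonneg _) fun j _ => ?_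
    rw [abs_cos_pi_mul]
    linarith [cos_pi_mul_intDist_le (x j), add_one_le_exp (-(2 * intDist (x j) ^ 2))]
  have := log_le_log hη ((h n).trans hprod)
  rw [log_exp] at this
  linarith

lemma tendsto_zero_of_summable_sq {f : ℕ → ℝ} (hf : ∀ j, 0 ≤ f j)
    (h : Summable fun j => f j ^ 2) : Tendsto f atTop (𝓝 0) := by
  simpa [Real.sqrt_sq (hf _)] using h.tendsto_atTop_zero.sqrt

lemma summable_sq_of_le_half_add {d e : ℕ → ℝ} {M q : ℕ} (he : ∀ j, 0 ≤ e j) (hsum : Summable fun j => d j ^ 2)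
    (hle : ∀ j ≥ M, e j ≤ (d j + d (j + q)) / 2) : Summable fun j => e j ^ 2 := by
  have hs (k : ℕ) : Summable fun j => d (j + k) ^ 2 := (summable_nat_add_iff k).2 hsum
  refine (summable_nat_add_iff M).1 (((hs M).add (hs (M + q))).of_nonneg_of_le
    (fun _ => sq_nonneg _) fun j => ?_)
  rw [← add_assoc]
  calc _ ≤ ((d (j + M) + d (j + M + q)) / 2) ^ 2 := pow_le_pow_left₀ (he _) (hle _ (by omega)) 2
    _ ≤ _ := by nlinarith [sq_nonneg (d (j + M) - d (j + M + q))]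

section muHat

variable {θ : ℝ}

lemma multipliable_cos (hθ : 1 < θ) (t : ℝ) :
    Multipliable fun k : ℕ => cos (2 * π * θ⁻¹ ^ k * t) := by
  have hr0 : 0 ≤ θ⁻¹ := inv_nonneg.2 (zero_le_one.trans hθ.le)
  have hr1 : θ⁻¹ < 1 := inv_lt_one_of_one_lt₀ hθ
  have hsum : Summable fun k : ℕ => cos (2 * π * θ⁻¹ ^ k * t) - 1 := by
    refine Summable.of_norm_bounded
      ((summable_geometric_of_lt_one (sq_nonneg _) (pow_lt_one₀ hr0 hr1 two_ne_zero)).mul_left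
        ((2 * π * t) ^ 2 / 2)) fun k => ?_
    have := one_sub_sq_div_two_le_cos (x := 2 * π * θ⁻¹ ^ k * t)
    rw [Real.norm_eq_abs, abs_of_nonpos (by linarith [cos_le_one (2 * π * θ⁻¹ ^ k * t)])]
    have : (2 * π * θ⁻¹ ^ k * t) ^ 2 / 2 = (2 * π * t) ^ 2 / 2 * (θ⁻¹ ^ 2) ^ k := by ring
    linarith
  simpa using Real.multipliable_one_add_of_summable hsum

lemma tendsto_prod_range_muHat (hθ : 1 < θ) (t : ℝ) :
    Tendsto (fun n => ∏ k ∈ Finset.range n, cos (2 * π * θ⁻¹ ^ k * t)) atTop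
      (𝓝 (muHat θ t)) :=
  (multipliable_cos hθ t).hasProd.tendsto_prod_nat

lemma muHat_zero : muHat θ 0 = 1 := by simp [muHat]

lemma muHat_eq_cos_mul (hθ : 1 < θ) (t : ℝ) :
    muHat θ t = cos (2 * π * t) * muHat θ (θ⁻¹ * t) := by
  have hshift : (fun k : ℕ => cos (2 * π * θ⁻¹ ^ (k + 1) * t))
      = fun k => cos (2 * π * θ⁻¹ ^ k * (θ⁻¹ * t)) := funext fun k => by ring_nf
  have := tprod_eq_zero_mul' (f := fun k : ℕ => cos (2 * π * θ⁻¹ ^ k * t))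
    (hshift ▸ multipliable_cos hθ _)
  simpa only [muHat, hshift, pow_zero, mul_one] using this

lemma muHat_mul (hθ : 1 < θ) (t : ℝ) :
    muHat θ (θ * t) = cos (2 * π * (θ * t)) * muHat θ t := by
  rw [muHat_eq_cos_mul hθ, inv_mul_cancel_left₀ (by linarith)]

lemma muHat_pow_mul (hθ : 1 < θ) (n : ℕ) (t : ℝ) :
    muHat θ (θ ^ n * t) =
      (∏ j ∈ Finset.range n, cos (2 * π * (θ ^ (j + 1) * t))) * muHat θ t := by
  induction n with
  | zero => simp
  | succ n ih =>
    rw [pow_succ', mul_assoc, muHat_mul hθ, ih, Finset.prod_range_succ, ← mul_assoc θ, ← pow_succ']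
    ring

lemma abs_muHat_le_one (hθ : 1 < θ) (t : ℝ) : |muHat θ t| ≤ 1 := by
  refine le_of_tendsto' (tendsto_prod_range_muHat hθ t).abs fun n => ?_
  rw [Finset.abs_prod]
  exact Finset.prod_le_one (fun _ _ => abs_nonneg _) fun _ _ => abs_cos_le_one _

lemma abs_muHat_le_abs_cos (hθ : 1 < θ) (t : ℝ) : |muHat θ t| ≤ |cos (2 * π * t)| := by
  rw [muHat_eq_cos_mul hθ, abs_mul]
  exact mul_le_of_le_one_right (abs_nonneg _) (abs_muHat_le_one hθ _)

lemma abs_muHat_pow_mul_le (hθ : 1 < θ) (n : ℕ) (t : ℝ) :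
    |muHat θ (θ ^ n * t)| ≤ |muHat θ t| := by
  rw [muHat_pow_mul hθ, abs_mul, Finset.abs_prod]
  exact mul_le_of_le_one_left (abs_nonneg _)
    (Finset.prod_le_one (fun _ _ => abs_nonneg _) fun _ _ => abs_cos_le_one _)

lemma abs_muHat_zpow_mul_le (hθ : 1 < θ) {k m : ℤ} (hkm : k ≤ m) (t : ℝ) :
    |muHat θ (θ ^ m * t)| ≤ |muHat θ (θ ^ k * t)| := by
  obtain ⟨n, rfl⟩ := Int.exists_add_of_le hkm
  rw [zpow_add₀ (by linarith), zpow_natCast, mul_comm (θ ^ k), mul_assoc]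
  exact abs_muHat_pow_mul_le hθ n _

lemma exists_lipschitzWith_muHat (hθ : 1 < θ) : ∃ C, LipschitzWith C (muHat θ) := by
  have hr0 : 0 ≤ θ⁻¹ := inv_nonneg.2 (zero_le_one.trans hθ.le)
  have hr1 : θ⁻¹ < 1 := inv_lt_one_of_one_lt₀ hθ
  set C : NNReal := ⟨2 * π / (1 - θ⁻¹), div_nonneg (by positivity) (by linarith)⟩
  have hpartial (n : ℕ) :
      LipschitzWith C fun t => ∏ k ∈ Finset.range n, cos (2 * π * θ⁻¹ ^ k * t) := by
    refine LipschitzWith.of_dist_le_mul fun s t => ?_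
    rw [Real.dist_eq, Real.dist_eq]
    calc _ ≤ ∑ k ∈ Finset.range n, |cos (2 * π * θ⁻¹ ^ k * s) - cos (2 * π * θ⁻¹ ^ k * t)| :=
          abs_prod_sub_prod_le _ (fun _ _ => abs_cos_le_one _) fun _ _ => abs_cos_le_one _
      _ ≤ ∑ k ∈ Finset.range n, 2 * π * θ⁻¹ ^ k * |s - t| := by
        gcongr with k
        refine (abs_cos_sub_cos_le _ _).trans_eq ?_
        rw [← mul_sub, abs_mul, abs_of_nonneg (by positivity)]
      _ ≤ 2 * π / (1 - θ⁻¹) * |s - t| := by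
        rw [← Finset.sum_mul, ← Finset.mul_sum, div_eq_mul_one_div]
        gcongr
        simpa using geom_sum_Ico_le_of_lt_one (m := 0) (n := n) hr0 hr1
  exact ⟨C, (isClosed_setOfPred_lipschitzWith C).mem_of_tendsto
    (tendsto_pi_nhds.2 (tendsto_prod_range_muHat hθ)) (Eventually.of_forall hpartial)⟩

lemma continuous_muHat (hθ : 1 < θ) : Continuous (muHat θ) :=
  (exists_lipschitzWith_muHat hθ).choose_spec.continuous

lemma one_sub_le_abs_muHat {C : NNReal} (hC : LipschitzWith C (muHat θ)) (t : ℝ) :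
    1 - C * |t| ≤ |muHat θ t| := by
  have := hC.dist_le_mul t 0
  rw [Real.dist_eq, Real.dist_eq, muHat_zero, sub_zero] at this
  have := abs_sub_abs_le_abs_sub 1 (muHat θ t)
  rw [abs_sub_comm] at this
  norm_num at *
  linarith

lemma muHat_zpow_mul_ne_zero (hθ : 1 < θ) {t : ℝ}
    (h : ∀ j : ℤ, cos (2 * π * (θ ^ j * t)) ≠ 0) (m : ℤ) : muHat θ (θ ^ m * t) ≠ 0 := by
  have hθ0 : θ ≠ 0 := by positivity
  obtain ⟨C, hC⟩ := exists_lipschitzWith_muHat hθ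
  obtain ⟨n, hn⟩ := pow_unbounded_of_one_lt (C * |θ ^ m * t|) hθ
  have hsmall : C * |θ ^ (m - n) * t| < 1 := by
    rw [zpow_sub₀ hθ0, div_mul_eq_mul_div, abs_div, abs_of_pos (by positivity : (0:ℝ) < θ ^ (n:ℤ)),
      zpow_natCast, ← mul_div_assoc, div_lt_one (by positivity)]
    exact hn
  have hsplit : θ ^ m * t = θ ^ n * (θ ^ (m - n) * t) := by
    rw [← mul_assoc, ← zpow_natCast, ← zpow_add₀ hθ0, add_sub_cancel]
  rw [hsplit, muHat_pow_mul hθ]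
  refine mul_ne_zero (Finset.prod_ne_zero_iff.2 fun j _ => ?_) ?_
  · rw [show 2 * π * (θ ^ (j + 1) * (θ ^ (m - n) * t))
        = 2 * π * (θ ^ (((j + 1 : ℕ) : ℤ) + (m - n)) * t) by rw [zpow_add₀ hθ0, zpow_natCast]; ring]
    exact h _
  · exact abs_pos.mp ((sub_pos.2 hsmall).trans_le (one_sub_le_abs_muHat hC _))

lemma abs_muHat_pow_mul_le_prod (hθ : 1 < θ) (n : ℕ) (t : ℝ) :
    |muHat θ (θ ^ n * t)| ≤ ∏ j ∈ Finset.range n, |cos (2 * π * (θ ^ (j + 1) * t))| := by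
  rw [muHat_pow_mul hθ, abs_mul, Finset.abs_prod]
  exact mul_le_of_le_one_right (by positivity) (abs_muHat_le_one hθ t)

lemma exists_pos_forall_le_abs_muHat_zpow_mul (hθ : 1 < θ) {η : ℝ}
    (hη : ∃ᶠ t in atTop, η ≤ |muHat θ t|) :
    ∃ u > 0, ∀ m : ℤ, η ≤ |muHat θ (θ ^ m * u)| := by
  have hθ0 : 0 < θ := by linarith
  choose t hjt hηt using fun j : ℕ => frequently_atTop.mp hη (θ ^ j)
  choose n hn using fun j => exists_mem_Ico_zpow ((pow_pos hθ0 j).trans_le (hjt j)) hθ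
  have hw (j : ℕ) : θ ^ (-n j) * t j ∈ Icc 1 θ := by
    rw [zpow_neg, inv_mul_eq_div, mem_Icc, one_le_div (zpow_pos hθ0 _),
      div_le_iff₀ (zpow_pos hθ0 _), ← zpow_one_add₀ hθ0.ne', add_comm]
    exact ⟨(hn j).1, (hn j).2.le⟩
  have hjn (j : ℕ) : (j : ℤ) ≤ n j := by
    have : θ ^ (j : ℤ) < θ ^ (n j + 1) := by
      rw [zpow_natCast]
      exact (hjt j).trans_lt (hn j).2
    have := (zpow_lt_zpow_iff_right₀ hθ).mp this
    omega
  obtain ⟨u, hu, φ, hφ, hlim⟩ := isCompact_Icc.tendsto_subseq hw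
  refine ⟨u, one_pos.trans_le hu.1, fun m => ?_⟩
  refine ge_of_tendsto (((continuous_muHat hθ).tendsto _).comp (hlim.const_mul _)).abs ?_
  filter_upwards [eventually_ge_atTop m.toNat] with j hj
  have hmn : m ≤ n (φ j) := by
    have := hjn (φ j)
    have : j ≤ φ j := hφ.id_le j
    omega
  calc η ≤ |muHat θ (t (φ j))| := hηt _
    _ = |muHat θ (θ ^ n (φ j) * (θ ^ (-n (φ j)) * t (φ j)))| := by
      rw [← mul_assoc, ← zpow_add₀ hθ0.ne', add_neg_cancel, zpow_zero, one_mul]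
    _ ≤ _ := abs_muHat_zpow_mul_le hθ hmn _

lemma summable_intDist_sq_two_mul_pow_mul (hθ : 1 < θ) {η u : ℝ} (hη : 0 < η)
    (h : ∀ m : ℤ, η ≤ |muHat θ (θ ^ m * u)|) :
    Summable fun j : ℕ => intDist (2 * (θ ^ j * u)) ^ 2 := by
  have hθ0 : θ ≠ 0 := by positivity
  refine summable_intDist_sq_of_le_prod_abs_cos hη fun n => ?_
  have hshift (k : ℕ) : θ ^ k * (θ ^ (-1 : ℤ) * u) = θ ^ ((k : ℤ) - 1) * u := by
    rw [← mul_assoc, ← zpow_natCast, ← zpow_add₀ hθ0, sub_eq_add_neg]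
  calc η ≤ |muHat θ (θ ^ n * (θ ^ (-1 : ℤ) * u))| := by rw [hshift]; exact h _
    _ ≤ _ := abs_muHat_pow_mul_le_prod hθ n _
    _ = _ := Finset.prod_congr rfl fun j _ => by
      rw [hshift, Nat.cast_add_one, add_sub_cancel_right, zpow_natCast]
      congr 2
      ring

lemma half_abs_muHat_le_abs_muHat_pow_mul (hθ : 1 < θ) {t : ℝ}
    (hsum : ∀ n, ∑ j ∈ Finset.range n, intDist (θ ^ (j + 1) * t) ^ 2 ≤ 1 / (4 * π ^ 2))
    (n : ℕ) : |muHat θ t| / 2 ≤ |muHat θ (θ ^ n * t)| := by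
  set a : ℕ → ℝ := fun j => 2 * π ^ 2 * intDist (θ ^ (j + 1) * t) ^ 2
  have ha0 (j : ℕ) : 0 ≤ a j := by positivity
  have hasum : ∑ j ∈ Finset.range n, a j ≤ 1 / 2 := by
    rw [← Finset.mul_sum]
    calc _ ≤ 2 * π ^ 2 * (1 / (4 * π ^ 2)) := by gcongr; exact hsum n
      _ = 1 / 2 := by field_simp; ring
  have ha1 : ∀ j ∈ Finset.range n, a j ≤ 1 := fun j hj =>
    (Finset.single_le_sum (fun i _ => ha0 i) hj).trans (hasum.trans (by norm_num))
  have hprod : 1 / 2 ≤ ∏ j ∈ Finset.range n, cos (2 * π * (θ ^ (j + 1) * t)) :=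
    calc 1 / 2 ≤ 1 - ∑ j ∈ Finset.range n, a j := by linarith
      _ ≤ ∏ j ∈ Finset.range n, (1 - a j) :=
        one_sub_sum_le_prod_one_sub _ (fun j _ => ha0 j) ha1
      _ ≤ _ := Finset.prod_le_prod (fun j hj => by linarith [ha1 j hj])
        fun j _ => one_sub_le_cos_two_pi_mul _
  rw [muHat_pow_mul hθ, abs_mul, abs_of_pos (by linarith : (0 : ℝ) < ∏ j ∈ Finset.range n, _)]
  nlinarith [abs_nonneg (muHat θ t)]

lemma exists_pos_eventually_le_abs_muHat_pow_mul (hθ : 1 < θ) {v : ℝ}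
    (hsum : Summable fun j : ℕ => intDist (θ ^ j * v) ^ 2)
    (hne : ∀ m : ℕ, muHat θ (θ ^ m * v) ≠ 0) :
    ∃ c > 0, ∀ᶠ i in atTop, c ≤ |muHat θ (θ ^ i * v)| := by
  set f : ℕ → ℝ := fun j => intDist (θ ^ j * v) ^ 2
  obtain ⟨M, hM⟩ := ((tendsto_sum_nat_add f).eventually
    (eventually_le_nhds (by positivity : (0 : ℝ) < 1 / (4 * π ^ 2)))).exists
  have htail (n : ℕ) : ∑ j ∈ Finset.range n, intDist (θ ^ (j + 1) * (θ ^ M * v)) ^ 2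
      ≤ 1 / (4 * π ^ 2) := by
    have hf : Summable fun k => f (k + M) := (summable_nat_add_iff M).2 hsum
    calc _ ≤ ∑ j ∈ Finset.range (n + 1), f (j + M) := by
          rw [Finset.sum_range_succ']
          simp only [f, ← mul_assoc, ← pow_add]
          linarith [sq_nonneg (intDist (θ ^ (0 + M) * v))]
      _ ≤ ∑' k, f (k + M) := hf.sum_le_tsum _ fun _ _ => sq_nonneg _
      _ ≤ _ := hM
  refine ⟨|muHat θ (θ ^ M * v)| / 2, by have := hne M; positivity, ?_⟩
  filter_upwards [eventually_ge_atTop M] with i hi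
  obtain ⟨n, rfl⟩ := Nat.exists_eq_add_of_le hi
  rw [add_comm, pow_add, mul_assoc]
  exact half_abs_muHat_le_abs_muHat_pow_mul hθ htail n

lemma not_tendsto_muHat_nat_of_frequently (hθ : 1 < θ) {s : ℕ → ℝ} {c : ℝ} (hc : 0 < c)
    (hs : Tendsto s atTop atTop)
    (h : ∀ ε > 0, ∃ᶠ i in atTop, c ≤ |muHat θ (s i)| ∧ intDist (s i) ≤ ε) :
    ¬ Tendsto (fun n : ℕ => muHat θ n) atTop (𝓝 0) := by
  intro hT
  obtain ⟨C, hC⟩ := exists_lipschitzWith_muHat hθ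
  obtain ⟨B, hB⟩ := Metric.tendsto_atTop.mp hT (c / 2) (half_pos hc)
  obtain ⟨i, ⟨hci, hdi⟩, hsi⟩ := ((h (c / (2 * (C + 1))) (by positivity)).and_eventually
    (hs.eventually_ge_atTop (B + 1))).exists
  have hround : (B : ℝ) ≤ round (s i) := by
    linarith [(abs_le.mp (intDist_le_half (s i))).2, show intDist (s i) = _ from rfl]
  obtain ⟨n, hn⟩ := Int.eq_ofNat_of_zero_le (show 0 ≤ round (s i) by
    exact_mod_cast (Nat.cast_nonneg B).trans hround)
  rw [hn, Int.cast_natCast] at hround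
  have hBn := hB n (by exact_mod_cast hround)
  have hlip := hC.dist_le_mul (s i) n
  rw [Real.dist_eq, sub_zero] at hBn
  rw [Real.dist_eq, Real.dist_eq,
    show |s i - n| = intDist (s i) by rw [intDist, hn, Int.cast_natCast]] at hlip
  have hCd : (C : ℝ) * intDist (s i) ≤ c / 2 := by
    calc (C : ℝ) * intDist (s i) ≤ (C + 1) * (c / (2 * (C + 1))) := by
          gcongr
          · exact intDist_nonneg _
          · linarith
      _ = c / 2 := by field_simp
  linarith [abs_sub_abs_le_abs_sub (muHat θ (s i)) (muHat θ n)]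

lemma not_tendsto_of_frequently_even (hθ : 1 < θ) {η u : ℝ} (hη : 0 < η) (hu : 0 < u)
    (hbound : ∀ m : ℕ, η ≤ |muHat θ (θ ^ m * u)|)
    (hd : Tendsto (fun j : ℕ => intDist (2 * (θ ^ j * u))) atTop (𝓝 0))
    (heven : ∃ᶠ j in atTop, Even (round (2 * (θ ^ j * u)))) :
    ¬ Tendsto (fun n : ℕ => muHat θ n) atTop (𝓝 0) := by
  refine not_tendsto_muHat_nat_of_frequently hθ hη
    ((tendsto_pow_atTop_atTop_of_one_lt hθ).atTop_mul_const hu) fun ε hε => ?_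
  refine (heven.and_eventually (hd.eventually (eventually_le_nhds (by positivity : 0 < 2 * ε)))).mono
    fun j ⟨hj, hdj⟩ => ⟨hbound j, ?_⟩
  have := intDist_half_add_le (x := 2 * (θ ^ j * u)) (y := 0) (by simpa using hj)
  rw [add_zero, mul_div_cancel_left₀ _ two_ne_zero, show intDist 0 = 0 by simp [intDist],
    add_zero] at this
  linarith

lemma cos_two_pi_zpow_mul_ne_zero (hθ : 1 < θ) {η u : ℝ} (hu : 0 < u)
    (hcos : ∀ j : ℤ, η ≤ |cos (π * (2 * (θ ^ j * u)))|) {M q : ℕ}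
    (hM : ∀ n ≥ M, π * intDist (2 * (θ ^ n * u)) < η) (hq : π * (2 * (θ ^ M * u)) < η * θ ^ q)
    (j : ℤ) : cos (2 * π * (θ ^ j * ((1 + θ ^ q) * u))) ≠ 0 := by
  -- The argument is `π (x_j + x_{j+q})` with `x_j = 2 θ^j u`: if `j + q ≥ M` then `x_{j+q}` is
  -- close to an integer, otherwise `x_j` itself is small; either way `|cos (π x_j)| ≥ η` survives.
  have hθ0 : 0 < θ := by linarith
  have hsplit : 2 * π * (θ ^ j * ((1 + θ ^ q) * u))
      = π * (2 * (θ ^ j * u) + 2 * (θ ^ (j + q) * u)) := by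
    rw [zpow_add₀ hθ0.ne', zpow_natCast]; ring
  rw [hsplit, ← abs_pos]
  rcases le_or_gt (M : ℤ) (j + q) with hjq | hjq
  · obtain ⟨n, hn⟩ := Int.eq_ofNat_of_zero_le (by omega : 0 ≤ j + q)
    have hn' := hM n (by omega)
    have := abs_cos_pi_mul_sub_le (2 * (θ ^ j * u)) (2 * (θ ^ (j + q) * u))
    rw [hn, zpow_natCast] at this ⊢
    linarith [hcos j]
  · have hsmall : π * (2 * (θ ^ j * u)) < η := by
      refine lt_of_mul_lt_mul_right ?_ (pow_pos hθ0 q).le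
      calc _ = π * (2 * (θ ^ (j + q) * u)) := by rw [zpow_add₀ hθ0.ne', zpow_natCast]; ring
        _ ≤ π * (2 * (θ ^ (M : ℤ) * u)) := by gcongr; exact hθ.le
        _ < _ := by rwa [zpow_natCast]
    have := abs_cos_sub_le_abs_cos_add (π * (2 * (θ ^ (j + q) * u))) (π * (2 * (θ ^ j * u)))
    have hpos : 0 < π * (2 * (θ ^ j * u)) := by have := zpow_pos hθ0 j; positivity
    rw [abs_of_pos hpos, ← mul_add, add_comm (2 * (θ ^ (j + q) * u))] at this
    linarith [hcos (j + q)]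

lemma not_tendsto_of_eventually_odd (hθ : 1 < θ) {η u : ℝ} (hη : 0 < η) (hu : 0 < u)
    (hbound : ∀ m : ℤ, η ≤ |muHat θ (θ ^ m * u)|)
    (hsum : Summable fun j : ℕ => intDist (2 * (θ ^ j * u)) ^ 2)
    (hodd : ∀ᶠ j in atTop, Odd (round (2 * (θ ^ j * u)))) :
    ¬ Tendsto (fun n : ℕ => muHat θ n) atTop (𝓝 0) := by
  set d : ℕ → ℝ := fun j => intDist (2 * (θ ^ j * u))
  have hd : Tendsto d atTop (𝓝 0) := tendsto_zero_of_summable_sq (fun _ => intDist_nonneg _) hsum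
  obtain ⟨M, hM⟩ := eventually_atTop.mp (hodd.and (hd.eventually (gt_mem_nhds (div_pos hη pi_pos))))
  obtain ⟨q, hq⟩ := pow_unbounded_of_one_lt (π * (2 * (θ ^ M * u)) / η) hθ
  set v := (1 + θ ^ q) * u
  have hdv : ∀ j ≥ M, intDist (θ ^ j * v) ≤ (d j + d (j + q)) / 2 := fun j hj => by
    rw [show θ ^ j * v = (2 * (θ ^ j * u) + 2 * (θ ^ (j + q) * u)) / 2 by rw [pow_add]; ring]
    exact intDist_half_add_le ((hM j hj).1.add_odd (hM (j + q) (by omega)).1)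
  have hne (m : ℕ) : muHat θ (θ ^ m * v) ≠ 0 := by
    have hcos (j : ℤ) : η ≤ |cos (π * (2 * (θ ^ j * u)))| := by
      rw [← mul_assoc, mul_comm π 2]
      exact (hbound j).trans (abs_muHat_le_abs_cos hθ _)
    have hM' (n : ℕ) (hn : n ≥ M) : π * d n < η := by
      rw [← lt_div_iff₀' pi_pos]; exact (hM n hn).2
    simpa using muHat_zpow_mul_ne_zero hθ
      (cos_two_pi_zpow_mul_ne_zero hθ hu hcos hM' (by rw [div_lt_iff₀ hη] at hq; linarith)) m
  have hsumv : Summable fun j : ℕ => intDist (θ ^ j * v) ^ 2 :=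
    summable_sq_of_le_half_add (fun _ => intDist_nonneg _) hsum hdv
  obtain ⟨c, hc, hcv⟩ := exists_pos_eventually_le_abs_muHat_pow_mul hθ hsumv hne
  refine not_tendsto_muHat_nat_of_frequently hθ (s := fun j => θ ^ j * v) hc
    ((tendsto_pow_atTop_atTop_of_one_lt hθ).atTop_mul_const (by positivity)) fun ε hε => ?_
  have hdq : Tendsto (fun j => d (j + q)) atTop (𝓝 0) := hd.comp (tendsto_add_atTop_nat q)
  refine (hcv.and ((eventually_ge_atTop M).and ((hd.eventually (eventually_le_nhds hε)).and
    (hdq.eventually (eventually_le_nhds hε))))).frequently.mono ?_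
  rintro j ⟨hcj, hjM, h1, h2⟩
  exact ⟨hcj, (hdv j hjM).trans (by linarith : (d j + d (j + q)) / 2 ≤ ε)⟩

end muHat

theorem stmt18_general (θ : ℝ) (hθ : IsPisot θ)
    (h : ¬ Tendsto (muHat θ) atTop (𝓝 0)) :
    ¬ Tendsto (fun n : ℕ => muHat θ n) atTop (𝓝 0) := by
  obtain ⟨η, hη, hfreq⟩ := exists_frequently_le_abs_of_not_tendsto h
  obtain ⟨u, hu, hbound⟩ := exists_pos_forall_le_abs_muHat_zpow_mul hθ.1 hfreq
  have hsum := summable_intDist_sq_two_mul_pow_mul hθ.1 hη hbound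
  by_cases heven : ∃ᶠ j in atTop, Even (round (2 * (θ ^ j * u)))
  · exact not_tendsto_of_frequently_even hθ.1 hη hu (fun m => by simpa using hbound m)
      (tendsto_zero_of_summable_sq (fun _ => intDist_nonneg _) hsum) heven
  · exact not_tendsto_of_eventually_odd hθ.1 hη hu hbound hsum
      (by simpa [not_frequently, Int.not_even_iff_odd] using heven)

theorem stmt18 (θ : ℝ) (hθ : IsPisot θ) (hθ2 : θ ≠ 2)
    (h : ¬ Tendsto (muHat θ) atTop (𝓝 0)) :
    ¬ Tendsto (fun n : ℕ => muHat θ n) atTop (𝓝 0) :=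
  stmt18_general θ hθ h
end
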